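/- arXiv:2602.03694 — 7 statements merged into one kernel-verified Lean document; each statement's English description precedes it below -/
import Mathlib

section
/- Let A be a C*-algebra (not necessarily unital), B a closed star-subalgebra of A, and E : A → A a conditional expectation from A onto B with finite probabilistic index. Then A is complete with respect to the norm a ↦ ‖E(a^* a)‖^{1/2} induced by E; that is, every sequence (x_k) in A satisfying ‖E((x_k − x_l)^* (x_k − x_l))‖ → 0 as k, l → ∞ converges in this norm to some element of A. (Equivalently, this norm is equivalent to the C*-norm of A, so that A is already a Hilbert C*-module over B with respect to the B-valued inner product ⟨x, y⟩ = E(x^* y).) -/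
open Filter Topology

/- A finite probabilistic index `γ` bounds the C*-norm by the norm induced by `E`,
`‖y‖² ≤ γ ‖E (y⋆ y)‖`, so a Cauchy sequence for the latter is Cauchy in `A` and has a limit
there; since `E` is continuous, it also converges to that limit in the norm induced by `E`. -/

theorem norm_sq_le_mul_norm_apply_star_mul_self {A : Type*} [NonUnitalCStarAlgebra A]
    [PartialOrder A] [StarOrderedRing A] {E : A → A} {γ : ℝ} (hγ : 0 ≤ γ)
    (hE : ∀ a : A, 0 ≤ a → a ≤ γ • E a) (y : A) :
    ‖y‖ ^ 2 ≤ γ * ‖E (star y * y)‖ :=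
  calc ‖y‖ ^ 2 = ‖star y * y‖ := by rw [CStarRing.norm_star_mul_self, sq]
    _ ≤ ‖γ • E (star y * y)‖ :=
        CStarAlgebra.norm_le_norm_of_nonneg_of_le (star_mul_self_nonneg y)
          (hE _ (star_mul_self_nonneg y))
    _ = γ * ‖E (star y * y)‖ := by rw [norm_smul, Real.norm_of_nonneg hγ]

theorem cauchySeq_of_norm_sq_le_mul {α : Type*} [SeminormedAddCommGroup α] {f : α → ℝ}
    {γ : ℝ} (hγ : 0 < γ) (hf : ∀ y, ‖y‖ ^ 2 ≤ γ * f y) {x : ℕ → α}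
    (hx : ∀ ε : ℝ, 0 < ε → ∃ N : ℕ, ∀ k ≥ N, ∀ l ≥ N, f (x k - x l) < ε) :
    CauchySeq x := by
  refine Metric.cauchySeq_iff.2 fun ε hε => ?_
  obtain ⟨N, hN⟩ := hx (ε ^ 2 / γ) (by positivity)
  refine ⟨N, fun k hk l hl => ?_⟩
  have hsq : ‖x k - x l‖ ^ 2 < ε ^ 2 :=
    calc ‖x k - x l‖ ^ 2 ≤ γ * f (x k - x l) := hf _
      _ < γ * (ε ^ 2 / γ) := mul_lt_mul_of_pos_left (hN k hk l hl) hγ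
      _ = ε ^ 2 := by field_simp
  rw [dist_eq_norm]
  exact lt_of_pow_lt_pow_left₀ 2 hε.le hsq

theorem ContinuousLinearMap.tendsto_norm_apply_star_mul_self_sub {𝕜 A ι : Type*}
    [NontriviallyNormedField 𝕜] [NonUnitalNormedRing A] [StarRing A] [NormedStarGroup A]
    [NormedSpace 𝕜 A] (E : A →L[𝕜] A) {l : Filter ι} {x : ι → A} {a : A}
    (hx : Tendsto x l (𝓝 a)) :
    Tendsto (fun k => ‖E (star (x k - a) * (x k - a))‖) l (𝓝 0) := by
  have hcont : Continuous fun y : A => ‖E (star y * y)‖ := by fun_prop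
  have hzero : Tendsto (fun y : A => ‖E (star y * y)‖) (𝓝 0) (𝓝 0) := by
    simpa using hcont.tendsto 0
  have hsub : Tendsto (fun k => x k - a) l (𝓝 0) := by simpa using hx.sub_const a
  exact hzero.comp hsub

theorem complete_in_expectation_norm_of_finite_probabilistic_index_general
    {A : Type*} [NonUnitalCStarAlgebra A] [PartialOrder A] [StarOrderedRing A]
    (E : A →L[ℂ] A)
    (hindex : ∃ γ : ℝ, 1 ≤ γ ∧ ∀ a : A, 0 ≤ a → a ≤ γ • E a) :
    ∀ x : ℕ → A,
      (∀ ε : ℝ, 0 < ε → ∃ N : ℕ, ∀ k ≥ N, ∀ l ≥ N,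
        ‖E (star (x k - x l) * (x k - x l))‖ < ε) →
      ∃ a : A, Filter.Tendsto (fun k => ‖E (star (x k - a) * (x k - a))‖)
        Filter.atTop (nhds 0) := by
  obtain ⟨γ, hγ, hE⟩ := hindex
  have hγ_pos : 0 < γ := one_pos.trans_le hγ
  intro x hx
  obtain ⟨a, ha⟩ := cauchySeq_tendsto_of_complete <| cauchySeq_of_norm_sq_le_mul hγ_pos
    (norm_sq_le_mul_norm_apply_star_mul_self hγ_pos.le hE) hx
  exact ⟨a, E.tendsto_norm_apply_star_mul_self_sub ha⟩

/-- If the conditional expectation `E` has finite probabilistic index, then `A`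
is complete with respect to the norm `a ↦ ‖E (a⋆ a)‖^(1/2)` induced by `E`: every sequence
that is Cauchy for this norm converges, in this norm, to some element of `A`. -/
theorem complete_in_expectation_norm_of_finite_probabilistic_index
    {A : Type*} [NonUnitalCStarAlgebra A] [PartialOrder A] [StarOrderedRing A]
    (B : NonUnitalStarSubalgebra ℂ A) (hB : IsClosed (B : Set A))
    (E : A →L[ℂ] A)
    (hrange : ∀ a : A, E a ∈ B)
    (hfix : ∀ b ∈ B, E b = b)
    (hpos : ∀ a : A, 0 ≤ a → 0 ≤ E a)
    (hbimod : ∀ b ∈ B, ∀ b' ∈ B, ∀ x : A, E (b * x * b') = b * E x * b')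
    (hindex : ∃ γ : ℝ, 1 ≤ γ ∧ ∀ a : A, 0 ≤ a → a ≤ γ • E a) :
    ∀ x : ℕ → A,
      (∀ ε : ℝ, 0 < ε → ∃ N : ℕ, ∀ k ≥ N, ∀ l ≥ N,
        ‖E (star (x k - x l) * (x k - x l))‖ < ε) →
      ∃ a : A, Filter.Tendsto (fun k => ‖E (star (x k - a) * (x k - a))‖)
        Filter.atTop (nhds 0) :=
  complete_in_expectation_norm_of_finite_probabilistic_index_general E hindex
end

section
/- Let A be a C*-algebra (not necessarily unital), B a closed star-subalgebra of A, and E : A → A a conditional expectation from A onto B with finite probabilistic index. Then A = A·B; more precisely: (i) every a ∈ A lies in the norm-closure of the linear span of {x b : x ∈ A, b ∈ B}; and (ii) every approximate identity for B is an approximate identity for A, i.e., if (u_λ) is a net of positive elements of B with ‖u_λ‖ ≤ 1 for all λ and ‖u_λ b − b‖ → 0 and ‖b u_λ − b‖ → 0 for every b ∈ B, then ‖u_λ a − a‖ → 0 and ‖a u_λ − a‖ → 0 for every a ∈ A. -/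
/-!
For `a ∈ A` put `c = E (star a * a) ∈ B`. Finite index gives `star a * a ≤ γ • c`, and
conjugating by `1 - u` in the unitization turns this into `‖a - a * u‖ ^ 2 ≤ γ * ‖c - c * u‖`
for every positive contraction `u`. Hence anything in `B` that is a right approximate unit for
`c` is one for `a`; taking adjoints handles the left side. For (i), the elements
`c / (c + ε)` of `B` form such a right approximate unit for `c`.
-/

open Filter Topology Unitization
open scoped CStarAlgebra

section

variable {A : Type*} [NonUnitalCStarAlgebra A] [PartialOrder A] [StarOrderedRing A]

theorem norm_sub_mul_sq_le_of_star_mul_self_le {a c u : A} {γ : ℝ} (hγ : 0 ≤ γ)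
    (h : star a * a ≤ γ • c) (hu₀ : 0 ≤ u) (hu₁ : ‖u‖ ≤ 1) :
    ‖a - a * u‖ ^ 2 ≤ γ * ‖c - c * u‖ := by
  have hu₀' : (0 : A⁺¹) ≤ u := inr_nonneg_iff.mpr hu₀
  have hu₁' : (u : A⁺¹) ≤ 1 := by
    rwa [← CStarAlgebra.norm_le_one_iff_of_nonneg _ hu₀', norm_inr]
  set v : A⁺¹ := 1 - (u : A⁺¹)
  have hv₀ : 0 ≤ v := sub_nonneg.mpr hu₁'
  have hv : ‖v‖ ≤ 1 := by
    simpa using CStarAlgebra.norm_le_norm_of_nonneg_of_le hv₀ (sub_le_self _ hu₀')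
  have hv_star : star v = v := hv₀.isSelfAdjoint.star_eq
  have hmul (x : A) : (x : A⁺¹) * v = (x - x * u : A) := by simp [v, mul_sub]
  have hle : ((star a * a : A) : A⁺¹) ≤ (γ • c : A) :=
    sub_nonneg.mp <| by simpa using inr_nonneg_iff.mpr (sub_nonneg.mpr h)
  calc ‖a - a * u‖ ^ 2 = ‖star ((a : A⁺¹) * v) * ((a : A⁺¹) * v)‖ := by
        rw [CStarRing.norm_star_mul_self, hmul, norm_inr, sq]
    _ = ‖star v * ((star a * a : A) : A⁺¹) * v‖ := by
        simp only [star_mul, inr_mul, inr_star, mul_assoc]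
    _ ≤ ‖star v * ((γ • c : A) : A⁺¹) * v‖ :=
        CStarAlgebra.norm_le_norm_of_nonneg_of_le
          (star_left_conjugate_nonneg (inr_nonneg_iff.mpr (star_mul_self_nonneg a)) v)
          (star_left_conjugate_le_conjugate hle v)
    _ = γ * ‖v * ((c : A⁺¹) * v)‖ := by
        rw [hv_star, inr_smul, mul_smul_comm, smul_mul_assoc, norm_smul, Real.norm_of_nonneg hγ,
          mul_assoc]
    _ ≤ γ * ‖(c : A⁺¹) * v‖ := by
        gcongr
        exact (norm_mul_le _ _).trans (mul_le_of_le_one_left (norm_nonneg _) hv)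
    _ = γ * ‖c - c * u‖ := by rw [hmul, norm_inr]

theorem tendsto_norm_mul_sub_of_star_mul_self_le {ι : Type*} {l : Filter ι} {u : ι → A}
    {a c : A} {γ : ℝ} (hγ : 0 ≤ γ) (h : star a * a ≤ γ • c) (hu : ∀ i, 0 ≤ u i ∧ ‖u i‖ ≤ 1)
    (hc : Tendsto (fun i => ‖c * u i - c‖) l (𝓝 0)) :
    Tendsto (fun i => ‖a * u i - a‖) l (𝓝 0) := by
  have hbound (i : ι) : ‖a * u i - a‖ ≤ √(γ * ‖c * u i - c‖) := by
    rw [Real.le_sqrt (norm_nonneg _) (by positivity), norm_sub_rev, norm_sub_rev (c * u i)]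
    exact norm_sub_mul_sq_le_of_star_mul_self_le hγ h (hu i).1 (hu i).2
  have hsqrt : Tendsto (fun i => √(γ * ‖c * u i - c‖)) l (𝓝 0) := by
    simpa using ((hc.const_mul γ).sqrt)
  exact squeeze_zero (fun _ => norm_nonneg _) hbound hsqrt

omit [PartialOrder A] [StarOrderedRing A] in
theorem IsSelfAdjoint.norm_mul_sub_eq_norm_star_mul_sub {u : A} (hu : IsSelfAdjoint u) (a : A) :
    ‖u * a - a‖ = ‖star a * u - star a‖ := by
  rw [← norm_star, star_sub, star_mul, hu.star_eq]

namespace NonUnitalStarSubalgebra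

variable (B : NonUnitalStarSubalgebra ℂ A) [IsClosed (B : Set A)] {c : A}

theorem exists_nonneg_norm_le_one_norm_mul_sub_le (hc : 0 ≤ c) (hcB : c ∈ B) {ε : ℝ}
    (hε : 0 < ε) : ∃ b ∈ B, 0 ≤ b ∧ ‖b‖ ≤ 1 ∧ ‖c * b - c‖ ≤ ε := by
  have hσ : ∀ t ∈ quasispectrum ℝ c, 0 ≤ t := quasispectrum_nonneg_of_nonneg c hc
  let f (t : ℝ) : ℝ := t / (t + ε)
  have hf : ContinuousOn f (quasispectrum ℝ c) :=
    continuousOn_id.div (by fun_prop) fun t ht => (add_pos_of_nonneg_of_pos (hσ t ht) hε).ne'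
  have hmul : c * cfcₙ f c - c = cfcₙ (fun t => t * f t - t) c := by
    rw [cfcₙ_sub (fun t => t * f t) (fun t => t) c (continuousOn_id.mul hf),
      cfcₙ_mul (fun t => t) f c (by fun_prop) rfl hf, cfcₙ_id' ℝ c]
  refine ⟨cfcₙ f c, cfcₙ_mem _ hcB, cfcₙ_nonneg fun t ht => ?_, norm_cfcₙ_le fun t ht => ?_, ?_⟩
  · have := hσ t ht
    positivity
  · have := hσ t ht
    rw [Real.norm_of_nonneg (by positivity), div_le_one (by positivity)]
    linarith
  · rw [hmul]
    refine norm_cfcₙ_le fun t ht => ?_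
    have ht₀ := hσ t ht
    have heq : t * f t - t = -(t * ε / (t + ε)) := by
      simp only [f]
      field_simp
      ring
    rw [heq, norm_neg, Real.norm_of_nonneg (by positivity), div_le_iff₀ (by positivity)]
    nlinarith

theorem exists_seq_tendsto_norm_mul_sub (hc : 0 ≤ c) (hcB : c ∈ B) :
    ∃ b : ℕ → A, (∀ n, b n ∈ B ∧ 0 ≤ b n ∧ ‖b n‖ ≤ 1) ∧
      Tendsto (fun n => ‖c * b n - c‖) atTop (𝓝 0) := by
  choose b hbB hb₀ hb₁ hb using fun n : ℕ =>
    B.exists_nonneg_norm_le_one_norm_mul_sub_le hc hcB (Nat.one_div_pos_of_nat (n := n))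
  exact ⟨b, fun n => ⟨hbB n, hb₀ n, hb₁ n⟩,
    squeeze_zero (fun _ => norm_nonneg _) hb tendsto_one_div_add_atTop_nhds_zero_nat⟩

end NonUnitalStarSubalgebra

end

theorem eq_mul_closure_and_approx_identity_of_finite_probabilistic_index_general
    {A : Type*} [NonUnitalCStarAlgebra A] [PartialOrder A] [StarOrderedRing A]
    (B : NonUnitalStarSubalgebra ℂ A) (hB : IsClosed (B : Set A))
    (E : A →L[ℂ] A)
    (hrange : ∀ a : A, E a ∈ B)
    (hpos : ∀ a : A, 0 ≤ a → 0 ≤ E a)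
    (hindex : ∃ γ : ℝ, 1 ≤ γ ∧ ∀ a : A, 0 ≤ a → a ≤ γ • E a) :
    (∀ a : A, a ∈ closure (Submodule.span ℂ
        {y : A | ∃ x : A, ∃ b ∈ B, y = x * b} : Set A)) ∧
    (∀ (ι : Type) (l : Filter ι), l.NeBot → ∀ u : ι → A,
      (∀ i, u i ∈ B ∧ 0 ≤ u i ∧ ‖u i‖ ≤ 1) →
      (∀ b ∈ B, Filter.Tendsto (fun i => ‖u i * b - b‖) l (nhds 0)) →
      (∀ b ∈ B, Filter.Tendsto (fun i => ‖b * u i - b‖) l (nhds 0)) →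
      ∀ a : A, Filter.Tendsto (fun i => ‖u i * a - a‖) l (nhds 0) ∧
        Filter.Tendsto (fun i => ‖a * u i - a‖) l (nhds 0)) := by
  obtain ⟨γ, hγ, hdom⟩ := hindex
  have hγ₀ : 0 ≤ γ := zero_le_one.trans hγ
  have hdom' (a : A) : star a * a ≤ γ • E (star a * a) := hdom _ (star_mul_self_nonneg a)
  refine ⟨fun a => ?_, fun ι l _ u hu _ hur a => ⟨?_, ?_⟩⟩
  · have : IsClosed (B : Set A) := hB
    obtain ⟨b, hb, hcb⟩ := B.exists_seq_tendsto_norm_mul_sub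
      (hpos _ (star_mul_self_nonneg a)) (hrange (star a * a))
    have hab := tendsto_norm_mul_sub_of_star_mul_self_le hγ₀ (hdom' a)
      (fun n => (hb n).2) hcb
    exact mem_closure_of_tendsto (tendsto_iff_norm_sub_tendsto_zero.mpr hab)
      (Eventually.of_forall fun n => Submodule.subset_span ⟨a, b n, (hb n).1, rfl⟩)
  · simp_rw [fun i => (hu i).2.1.isSelfAdjoint.norm_mul_sub_eq_norm_star_mul_sub a]
    exact tendsto_norm_mul_sub_of_star_mul_self_le hγ₀ (hdom' (star a))
      (fun i => (hu i).2) (hur _ (hrange _))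
  · exact tendsto_norm_mul_sub_of_star_mul_self_le hγ₀ (hdom' a)
      (fun i => (hu i).2) (hur _ (hrange _))

/-- If the conditional expectation `E : A → B` has finite probabilistic index,
then `A = A·B`: (i) every `a ∈ A` lies in the closure of the span of products `x * b` with
`x ∈ A`, `b ∈ B`; and (ii) every approximate identity for `B` is an approximate identity
for `A`. -/
theorem eq_mul_closure_and_approx_identity_of_finite_probabilistic_index
    {A : Type*} [NonUnitalCStarAlgebra A] [PartialOrder A] [StarOrderedRing A]
    (B : NonUnitalStarSubalgebra ℂ A) (hB : IsClosed (B : Set A))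
    (E : A →L[ℂ] A)
    (hrange : ∀ a : A, E a ∈ B)
    (hfix : ∀ b ∈ B, E b = b)
    (hpos : ∀ a : A, 0 ≤ a → 0 ≤ E a)
    (hbimod : ∀ b ∈ B, ∀ b' ∈ B, ∀ x : A, E (b * x * b') = b * E x * b')
    (hindex : ∃ γ : ℝ, 1 ≤ γ ∧ ∀ a : A, 0 ≤ a → a ≤ γ • E a) :
    (∀ a : A, a ∈ closure (Submodule.span ℂ
        {y : A | ∃ x : A, ∃ b ∈ B, y = x * b} : Set A)) ∧
    (∀ (ι : Type) (l : Filter ι), l.NeBot → ∀ u : ι → A,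
      (∀ i, u i ∈ B ∧ 0 ≤ u i ∧ ‖u i‖ ≤ 1) →
      (∀ b ∈ B, Filter.Tendsto (fun i => ‖u i * b - b‖) l (nhds 0)) →
      (∀ b ∈ B, Filter.Tendsto (fun i => ‖b * u i - b‖) l (nhds 0)) →
      ∀ a : A, Filter.Tendsto (fun i => ‖u i * a - a‖) l (nhds 0) ∧
        Filter.Tendsto (fun i => ‖a * u i - a‖) l (nhds 0)) :=
  eq_mul_closure_and_approx_identity_of_finite_probabilistic_index_general B hB E hrange hpos hindex
end

section
/- Let A be a C*-algebra (not necessarily unital), B a closed star-subalgebra of A, and E : A → A a conditional expectation from A onto B with finite probabilistic index. Then for a ∈ A the following are equivalent: (i) a ∈ B; (ii) E(a x) = a E(x) for all x ∈ A. (This is the statement {e_E}' ∩ λ(A) = λ(B) about the Jones projection of the basic construction, expressed without reference to the basic construction: the equality e_E λ(a) = λ(a) e_E of operators on the Hilbert B-module completion of A is equivalent to condition (ii).) -/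
/-!
Finite index forces `B` to contain a right approximate unit for all of `A`. Given finitely many
`r ∈ A`, the element `h := γ • E (∑ r⋆ r)` lies in `B` and dominates every `r⋆ r`. With
`δ > 0` and `u := h (h + δ)⁻¹ ∈ B` one has `(1 - u) h (1 - u) = δ² h (h + δ)⁻² ≤ δ`, hence
`‖r - r u‖² ≤ δ` for each such `r`. If `a ∈ B`, letting `δ → 0` in `E (a x u) = a E(x) u`
gives `E (a x) = a E(x)`; conversely, if `E (a ·) = a E(·)`, then `a u = E (a u) ∈ B`
converges to `a`, which lies in `B` because `B` is closed.
-/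

open Filter Topology
open scoped CStarAlgebra

lemma norm_mul_cfc_div_add_sq_le {D : Type*} [CStarAlgebra D] [PartialOrder D] [StarOrderedRing D]
    {h r : D} (hh : 0 ≤ h) (hr : star r * r ≤ h) {δ : ℝ} (hδ : 0 < δ) :
    ‖r * cfc (fun t : ℝ => δ / (t + δ)) h‖ ^ 2 ≤ δ := by
  have hspec : ∀ t ∈ spectrum ℝ h, 0 ≤ t := fun t ht => spectrum_nonneg_of_nonneg hh ht
  have hcont : ContinuousOn (fun t : ℝ => δ / (t + δ)) (spectrum ℝ h) :=
    continuousOn_const.div (continuousOn_id.add continuousOn_const)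
      fun t ht => (by linarith [hspec t ht] : t + δ ≠ 0)
  set w := cfc (fun t : ℝ => δ / (t + δ)) h
  have hw : IsSelfAdjoint w := cfc_predicate _ h
  have hconj : w * h * w = cfc (fun t : ℝ => δ / (t + δ) * t * (δ / (t + δ))) h := by
    rw [cfc_mul (fun t : ℝ => δ / (t + δ) * t) _ h (hcont.mul continuousOn_id) hcont,
      cfc_mul (fun t : ℝ => δ / (t + δ)) (fun t : ℝ => t) h hcont continuousOn_id, cfc_id' ℝ h]
  calc ‖r * w‖ ^ 2 = ‖star w * (star r * r) * w‖ := by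
        rw [sq, ← CStarRing.norm_star_mul_self, star_mul]; noncomm_ring
    _ ≤ ‖w * h * w‖ := by
        rw [hw.star_eq]
        exact CStarAlgebra.norm_le_norm_of_nonneg_of_le
          (hw.conjugate_nonneg (star_mul_self_nonneg r)) (hw.conjugate_le_conjugate hr)
    _ ≤ δ := by
        rw [hconj]
        refine norm_cfc_le hδ.le fun t ht => ?_
        have ht0 := hspec t ht
        rw [Real.norm_eq_abs, abs_of_nonneg (by positivity), div_mul_eq_mul_div,
          div_mul_div_comm, div_le_iff₀ (by positivity)]
        nlinarith [mul_nonneg (mul_nonneg hδ.le ht0) ht0, mul_nonneg (mul_nonneg hδ.le ht0) hδ.le,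
          pow_pos hδ 3]

section NonUnital

variable {A : Type*} [NonUnitalCStarAlgebra A] [PartialOrder A] [StarOrderedRing A]

lemma norm_sub_mul_cfcₙ_div_add_sq_le {h r : A} (hh : 0 ≤ h) (hr : star r * r ≤ h) {δ : ℝ}
    (hδ : 0 < δ) :
    ‖r - r * cfcₙ (fun t : ℝ => t / (t + δ)) h‖ ^ 2 ≤ δ := by
  have hh' : (0 : A⁺¹) ≤ h := Unitization.inr_nonneg_iff.mpr hh
  have hr' : star (r : A⁺¹) * r ≤ h := by
    rwa [← Unitization.inr_star, ← Unitization.inr_mul,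
      Unitization.inr_le_iff _ _ (.star_mul_self r) hh.isSelfAdjoint]
  have hspec : ∀ t ∈ spectrum ℝ (h : A⁺¹), t + δ ≠ 0 := fun t ht =>
    (add_pos_of_nonneg_of_pos (spectrum_nonneg_of_nonneg hh' ht) hδ).ne'
  have hcont : ContinuousOn (fun t : ℝ => t / (t + δ)) (spectrum ℝ (h : A⁺¹)) :=
    continuousOn_id.div (continuousOn_id.add continuousOn_const) hspec
  have hone : 1 - cfc (fun t : ℝ => t / (t + δ)) (h : A⁺¹) =
      cfc (fun t : ℝ => δ / (t + δ)) (h : A⁺¹) := by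
    rw [← cfc_one ℝ (h : A⁺¹), ← cfc_sub (1 : ℝ → ℝ) _ (h : A⁺¹) continuousOn_const hcont]
    exact cfc_congr fun t ht => by field_simp [hspec t ht]; simp
  rw [← Unitization.norm_inr (𝕜 := ℂ), Unitization.inr_sub, Unitization.inr_mul,
    Unitization.real_cfcₙ_eq_cfc_inr _ _ (by simp), ← mul_one_sub, hone]
  exact norm_mul_cfc_div_add_sq_le hh' hr' hδ

lemma exists_seq_mem_tendsto_mul_of_le {B : NonUnitalStarSubalgebra ℂ A}
    (hB : IsClosed (B : Set A)) {h : A} (hh : 0 ≤ h) (hhB : h ∈ B) :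
    ∃ u : ℕ → A, (∀ n, u n ∈ B) ∧
      ∀ r : A, star r * r ≤ h → Tendsto (fun n => r * u n) atTop (𝓝 r) := by
  refine ⟨fun n => cfcₙ (fun t : ℝ => t / (t + 1 / (n + 1))) h, fun n => cfcₙ_mem _ hhB,
    fun r hr => ?_⟩
  have hsqrt : Tendsto (fun n : ℕ => √(1 / ((n : ℝ) + 1))) atTop (𝓝 0) := by
    simpa using tendsto_one_div_add_atTop_nhds_zero_nat.sqrt
  rw [tendsto_iff_norm_sub_tendsto_zero]
  refine squeeze_zero (fun n => norm_nonneg _) (fun n => ?_) hsqrt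
  rw [norm_sub_rev]
  exact Real.le_sqrt_of_sq_le (norm_sub_mul_cfcₙ_div_add_sq_le hh hr Nat.one_div_pos_of_nat)

lemma exists_seq_mem_tendsto_mul_of_finite_index {B : NonUnitalStarSubalgebra ℂ A}
    (hB : IsClosed (B : Set A)) {E : A →L[ℂ] A} (hrange : ∀ a : A, E a ∈ B) {γ : ℝ}
    (hindex : ∀ a : A, 0 ≤ a → a ≤ γ • E a) (S : Finset A) :
    ∃ u : ℕ → A, (∀ n, u n ∈ B) ∧ ∀ r ∈ S, Tendsto (fun n => r * u n) atTop (𝓝 r) := by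
  have hsq : ∀ r ∈ S, 0 ≤ star r * r := fun r _ => star_mul_self_nonneg r
  set y := ∑ r ∈ S, star r * r
  have hy : 0 ≤ y := Finset.sum_nonneg hsq
  have hyB : γ • E y ∈ B := Complex.coe_smul γ (E y) ▸ B.smul_mem (γ : ℂ) (hrange y)
  obtain ⟨u, huB, hu⟩ := exists_seq_mem_tendsto_mul_of_le hB (hy.trans (hindex y hy)) hyB
  exact ⟨u, huB, fun r hr => hu r ((Finset.single_le_sum hsq hr).trans (hindex y hy))⟩

end NonUnital

theorem mem_iff_commutes_with_expectation_general
    {A : Type*} [NonUnitalCStarAlgebra A] [PartialOrder A] [StarOrderedRing A]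
    (B : NonUnitalStarSubalgebra ℂ A) (hB : IsClosed (B : Set A))
    (E : A →L[ℂ] A)
    (hrange : ∀ a : A, E a ∈ B)
    (hfix : ∀ b ∈ B, E b = b)
    (hbimod : ∀ b ∈ B, ∀ b' ∈ B, ∀ x : A, E (b * x * b') = b * E x * b')
    (hindex : ∃ γ : ℝ, 1 ≤ γ ∧ ∀ a : A, 0 ≤ a → a ≤ γ • E a) :
    ∀ a : A, a ∈ B ↔ ∀ x : A, E (a * x) = a * E x := by
  obtain ⟨γ, -, hγ⟩ := hindex
  intro a
  constructor
  · intro haB x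
    classical
    obtain ⟨u, huB, hu⟩ :=
      exists_seq_mem_tendsto_mul_of_finite_index hB hrange hγ {a * x, a * E x}
    refine tendsto_nhds_unique ((E.continuous.tendsto _).comp (hu (a * x) (by simp))) ?_
    exact (hu (a * E x) (by simp)).congr fun n => (hbimod a haB (u n) (huB n) x).symm
  · intro hcomm
    obtain ⟨u, huB, hu⟩ := exists_seq_mem_tendsto_mul_of_finite_index hB hrange hγ {a}
    refine hB.mem_of_tendsto (hu a (by simp)) (Eventually.of_forall fun n => ?_)
    have hfixed : E (a * u n) = a * u n := by rw [hcomm, hfix (u n) (huB n)]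
    exact hfixed ▸ hrange (a * u n)

/-- For a conditional expectation `E : A → B` with finite probabilistic index,
an element `a ∈ A` belongs to `B` if and only if `E (a x) = a E (x)` for all `x ∈ A`
(i.e. `{e_E}' ∩ λ(A) = λ(B)`). -/
theorem mem_iff_commutes_with_expectation
    {A : Type*} [NonUnitalCStarAlgebra A] [PartialOrder A] [StarOrderedRing A]
    (B : NonUnitalStarSubalgebra ℂ A) (hB : IsClosed (B : Set A))
    (E : A →L[ℂ] A)
    (hrange : ∀ a : A, E a ∈ B)
    (hfix : ∀ b ∈ B, E b = b)
    (hpos : ∀ a : A, 0 ≤ a → 0 ≤ E a)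
    (hbimod : ∀ b ∈ B, ∀ b' ∈ B, ∀ x : A, E (b * x * b') = b * E x * b')
    (hindex : ∃ γ : ℝ, 1 ≤ γ ∧ ∀ a : A, 0 ≤ a → a ≤ γ • E a) :
    ∀ a : A, a ∈ B ↔ ∀ x : A, E (a * x) = a * E x :=
  mem_iff_commutes_with_expectation_general B hB E hrange hfix hbimod hindex
end

section
/- Let A be a C*-algebra (not necessarily unital), B a closed star-subalgebra of A, and E : A → A a conditional expectation from A onto B. If E admits a finite quasi-basis, then A and B are unital with common identity; that is, there exists e ∈ B such that e a = a and a e = a for every a ∈ A. -/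
/-!
Along an approximate unit, the quasi-basis expansion `x = ∑ uᵢ E(uᵢ* x)` of `x` converges to
`e := ∑ uᵢ E(uᵢ*)`, so `e` is a unit of `A`. Then `b E(e) b' = E(b e b') = b b'` for `b, b' ∈ B`,
which by the C*-identity makes `E(e)` a unit of `B`, hence, expanding again, a right unit of `A`.
So `e = e E(e) = E(e) ∈ B`.
-/

open Filter Topology

namespace Filter.IsApproximateUnit

variable {α : Type*} [TopologicalSpace α]

lemma mul_eq_self_of_tendsto_id [Mul α] [T2Space α] [SeparatelyContinuousMul α] {l : Filter α}
    (hl : l.IsApproximateUnit) {e : α} (he : Tendsto id l (𝓝 e)) (a : α) :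
    e * a = a ∧ a * e = a :=
  have := hl.neBot
  ⟨tendsto_nhds_unique (he.mul_const a) (hl.tendsto_mul_right a),
    tendsto_nhds_unique (he.const_mul a) (hl.tendsto_mul_left a)⟩

lemma tendsto_id_of_eq_sum [NonUnitalNonAssocSemiring α] [IsTopologicalSemiring α]
    {ι : Type*} [Fintype ι] {l : Filter α} (hl : l.IsApproximateUnit) {u v : ι → α}
    {T : α → α} (hT : Continuous T) (h : ∀ x, x = ∑ i, u i * T (v i * x)) :
    Tendsto id l (𝓝 (∑ i, u i * T (v i))) :=
  (tendsto_finsetSum _ fun i _ ↦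
    ((hT.tendsto _).comp (hl.tendsto_mul_left (v i))).const_mul (u i)).congr fun x ↦ (h x).symm

end Filter.IsApproximateUnit

section CStarRing

variable {A S : Type*} [NonUnitalNormedRing A] [StarRing A] [CStarRing A] [SetLike S A]
  [NonUnitalSubringClass S A] [StarMemClass S A] {B : S} {f : A}

/-- With `c := f * b - b ∈ B`, the hypothesis applied to `star c` and `b` gives `star c * c = 0`;
symmetrically on the right. -/
lemma mul_eq_self_of_mul_mul_eq_mul (hf : f ∈ B) (h : ∀ b ∈ B, ∀ b' ∈ B, b * f * b' = b * b')
    {b : A} (hb : b ∈ B) : f * b = b ∧ b * f = b := by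
  have hl : f * b - b ∈ B := sub_mem (mul_mem hf hb) hb
  have hr : b * f - b ∈ B := sub_mem (mul_mem hb hf) hb
  constructor
  · rw [← sub_eq_zero, ← CStarRing.star_mul_self_eq_zero_iff, mul_sub, ← mul_assoc,
      h _ (star_mem hl) b hb, sub_self]
  · rw [← sub_eq_zero, ← CStarRing.mul_star_self_eq_zero_iff, sub_mul,
      h b hb _ (star_mem hr), sub_self]

end CStarRing

theorem unital_of_finite_quasi_basis_general
    {A : Type*} [NonUnitalCStarAlgebra A] [PartialOrder A] [StarOrderedRing A]
    (B : NonUnitalStarSubalgebra ℂ A)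
    (E : A →L[ℂ] A)
    (hrange : ∀ a : A, E a ∈ B)
    (hfix : ∀ b ∈ B, E b = b)
    (hbimod : ∀ b ∈ B, ∀ b' ∈ B, ∀ x : A, E (b * x * b') = b * E x * b')
    (hqb : ∃ (n : ℕ) (u : Fin n → A), ∀ x : A, x = ∑ i, u i * E (star (u i) * x)) :
    ∃ e ∈ B, ∀ a : A, e * a = a ∧ a * e = a := by
  obtain ⟨n, u, hu⟩ := hqb
  have hl := (CStarAlgebra.increasingApproximateUnit A).toIsApproximateUnit
  set e := ∑ i, u i * E (star (u i))
  have he : ∀ a, e * a = a ∧ a * e = a :=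
    hl.mul_eq_self_of_tendsto_id (hl.tendsto_id_of_eq_sum E.continuous hu)
  have hEe : ∀ b ∈ B, ∀ b' ∈ B, b * E e * b' = b * b' := fun b hb b' hb' ↦ by
    rw [← hbimod b hb b' hb', mul_assoc, (he b').1, hfix _ (mul_mem hb hb')]
  have hEe_right : ∀ a, a * E e = a := fun a ↦
    calc a * E e = (∑ i, u i * E (star (u i) * a)) * E e := by rw [← hu a]
      _ = ∑ i, u i * E (star (u i) * a) := by
        simp only [Finset.sum_mul, mul_assoc,
          (mul_eq_self_of_mul_mul_eq_mul (hrange e) hEe (hrange _)).2]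
      _ = a := (hu a).symm
  have heE : E e = e := (he (E e)).1.symm.trans (hEe_right e)
  exact ⟨e, heE ▸ hrange e, he⟩

/-- If a conditional expectation `E : A → B` admits a finite quasi-basis, then
`A` and `B` are unital with common identity: there is `e ∈ B` which is a two-sided identity
for `A`. -/
theorem unital_of_finite_quasi_basis
    {A : Type*} [NonUnitalCStarAlgebra A] [PartialOrder A] [StarOrderedRing A]
    (B : NonUnitalStarSubalgebra ℂ A) (hB : IsClosed (B : Set A))
    (E : A →L[ℂ] A)
    (hrange : ∀ a : A, E a ∈ B)
    (hfix : ∀ b ∈ B, E b = b)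
    (hpos : ∀ a : A, 0 ≤ a → 0 ≤ E a)
    (hbimod : ∀ b ∈ B, ∀ b' ∈ B, ∀ x : A, E (b * x * b') = b * E x * b')
    (hqb : ∃ (n : ℕ) (u : Fin n → A), ∀ x : A, x = ∑ i, u i * E (star (u i) * x)) :
    ∃ e ∈ B, ∀ a : A, e * a = a ∧ a * e = a :=
  unital_of_finite_quasi_basis_general B E hrange hfix hbimod hqb
end

section
/- Let A be a C*-algebra (not necessarily unital), B a closed star-subalgebra of A, and E : A → A a conditional expectation from A onto B. If E admits a finite quasi-basis, then E has finite probabilistic index, i.e., there exists a real number γ ≥ 1 such that a ≤ γ•E(a) for every positive element a of A; in particular, E is faithful (E(a^* a) = 0 implies a = 0). -/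
/-!
Expanding `x = ∑ i, u i * E (u i⋆ * x)` and applying the Hilbert C⋆-module Cauchy–Schwarz
inequality to the row `(u i)` and the column `(E (u i⋆ * x))` gives
`x⋆x ≤ ‖c‖ • ∑ i, E (u i⋆ * x)⋆ * E (u i⋆ * x)` with `c = ∑ i, u i * u i⋆`. By the
Kadison–Schwarz inequality `E y⋆ * E y ≤ E (y⋆y)` for the bimodular map `E`, the sum is at most
`E (x⋆ * c * x) ≤ ‖c‖ • E (x⋆x)`. Hence `x⋆x ≤ ‖c‖ ^ 2 • E (x⋆x)`, which is the index bound with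
`γ = max 1 ‖c‖²` since every positive element is of the form `x⋆x`, and faithfulness follows.
-/

open scoped WithCStarModule

section Algebra

variable {A : Type*} [NonUnitalCStarAlgebra A]

namespace NonUnitalStarSubalgebra

variable {B : NonUnitalStarSubalgebra ℂ A}

theorem eq_zero_of_forall_mul_mul_eq_zero {z : A} (hz : z ∈ B)
    (h : ∀ b₁ ∈ B, ∀ b₂ ∈ B, b₁ * z * b₂ = 0) : z = 0 := by
  have hw : star (star z * z) * (star z * z) = 0 := by
    rw [(IsSelfAdjoint.star_mul_self z).star_eq]
    exact h (star z) (star_mem hz) (star z * z) (mul_mem (star_mem hz) hz)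
  exact (CStarRing.star_mul_self_eq_zero_iff z).mp <|
    (CStarRing.star_mul_self_eq_zero_iff _).mp hw

theorem eq_of_forall_mul_mul_eq {y y' : A} (hy : y ∈ B) (hy' : y' ∈ B)
    (h : ∀ b₁ ∈ B, ∀ b₂ ∈ B, b₁ * y * b₂ = b₁ * y' * b₂) : y = y' :=
  sub_eq_zero.mp <| eq_zero_of_forall_mul_mul_eq_zero (sub_mem hy hy') fun b₁ h₁ b₂ h₂ => by
    rw [mul_sub, sub_mul, h b₁ h₁ b₂ h₂, sub_self]

end NonUnitalStarSubalgebra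

variable {B : NonUnitalStarSubalgebra ℂ A} {E : A → A}

theorem apply_mul_right_of_mem (hrange : ∀ a, E a ∈ B)
    (hbimod : ∀ b ∈ B, ∀ b' ∈ B, ∀ x, E (b * x * b') = b * E x * b') {b : A} (hb : b ∈ B)
    (x : A) : E (x * b) = E x * b :=
  B.eq_of_forall_mul_mul_eq (hrange _) (mul_mem (hrange x) hb) fun b₁ h₁ b₂ h₂ => by
    calc b₁ * E (x * b) * b₂ = E (b₁ * x * (b * b₂)) := by
          rw [← hbimod b₁ h₁ b₂ h₂]; simp only [mul_assoc]
      _ = b₁ * (E x * b) * b₂ := by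
          rw [hbimod b₁ h₁ _ (mul_mem hb h₂)]; simp only [mul_assoc]

theorem apply_mul_left_of_mem (hrange : ∀ a, E a ∈ B)
    (hbimod : ∀ b ∈ B, ∀ b' ∈ B, ∀ x, E (b * x * b') = b * E x * b') {b : A} (hb : b ∈ B)
    (x : A) : E (b * x) = b * E x :=
  B.eq_of_forall_mul_mul_eq (hrange _) (mul_mem hb (hrange x)) fun b₁ h₁ b₂ h₂ => by
    calc b₁ * E (b * x) * b₂ = E (b₁ * b * x * b₂) := by
          rw [← hbimod b₁ h₁ b₂ h₂]; simp only [mul_assoc]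
      _ = b₁ * (b * E x) * b₂ := by
          rw [hbimod _ (mul_mem h₁ hb) b₂ h₂]; simp only [mul_assoc]

end Algebra

section Order

variable {A : Type*} [NonUnitalCStarAlgebra A] [PartialOrder A] [StarOrderedRing A]

theorem star_sum_mul_sum_le_norm_smul {ι : Type*} [Fintype ι] (u v : ι → A) :
    star (∑ i, u i * v i) * ∑ i, u i * v i ≤
      ‖∑ i, u i * star (u i)‖ • ∑ i, star (v i) * v i := by
  let row : C⋆ᵐᵒᵈ(A, ι → A) := (WithCStarModule.equiv A _).symm u
  let col : C⋆ᵐᵒᵈ(A, ι → A) := (WithCStarModule.equiv A _).symm fun i => star (v i)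
  simpa [WithCStarModule.pi_inner, WithCStarModule.inner_def, WithCStarModule.pi_norm_sq, row,
    col, star_sum] using CStarModule.inner_mul_inner_swap_le (A := A) (x := row) (y := col)

namespace PositiveLinearMap

variable {B : NonUnitalStarSubalgebra ℂ A} (Φ : A →ₚ[ℂ] A)

theorem star_apply_mul_apply_le (hrange : ∀ a, Φ a ∈ B)
    (hfix : ∀ b ∈ B, Φ b = b) (hbimod : ∀ b ∈ B, ∀ b' ∈ B, ∀ x, Φ (b * x * b') = b * Φ x * b')
    (x : A) : star (Φ x) * Φ x ≤ Φ (star x * x) := by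
  have hΦx : star (Φ x) ∈ B := star_mem (hrange x)
  have h := OrderHomClass.mono Φ (star_mul_self_nonneg (x - Φ x))
  rw [star_sub, sub_mul, mul_sub, mul_sub, map_zero, map_sub, map_sub, map_sub,
    apply_mul_right_of_mem hrange hbimod (hrange x), apply_mul_left_of_mem hrange hbimod hΦx,
    hfix _ (mul_mem hΦx (hrange x)), map_star, sub_self, sub_zero, sub_nonneg] at h
  exact h

theorem star_mul_self_le_norm_sq_smul_of_quasiBasis (hrange : ∀ a, Φ a ∈ B)
    (hfix : ∀ b ∈ B, Φ b = b) (hbimod : ∀ b ∈ B, ∀ b' ∈ B, ∀ x, Φ (b * x * b') = b * Φ x * b')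
    {ι : Type*} [Fintype ι] (u : ι → A) (hu : ∀ x, x = ∑ i, u i * Φ (star (u i) * x)) (x : A) :
    star x * x ≤ ‖∑ i, u i * star (u i)‖ ^ 2 • Φ (star x * x) := by
  set c := ∑ i, u i * star (u i)
  have hc : IsSelfAdjoint c :=
    .of_nonneg <| Finset.sum_nonneg fun i _ => mul_star_self_nonneg (u i)
  calc star x * x = star (∑ i, u i * Φ (star (u i) * x)) * ∑ i, u i * Φ (star (u i) * x) := by
        rw [← hu x]
    _ ≤ ‖c‖ • ∑ i, star (Φ (star (u i) * x)) * Φ (star (u i) * x) :=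
        star_sum_mul_sum_le_norm_smul _ _
    _ ≤ ‖c‖ • ∑ i, Φ (star x * (u i * star (u i)) * x) := by
        gcongr with i
        simpa [mul_assoc] using Φ.star_apply_mul_apply_le hrange hfix hbimod (star (u i) * x)
    _ = ‖c‖ • Φ (star x * c * x) := by
        simp only [c, ← map_sum, Finset.mul_sum, Finset.sum_mul]
    _ ≤ ‖c‖ • Φ (‖c‖ • (star x * x)) := by
        gcongr
        exact CStarAlgebra.star_left_conjugate_le_norm_smul hc
    _ = ‖c‖ ^ 2 • Φ (star x * x) := by
        rw [LinearMapClass.map_smul_of_tower, smul_smul, sq]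

end PositiveLinearMap

end Order

theorem finite_probabilistic_index_and_faithful_of_finite_quasi_basis_general
    {A : Type*} [NonUnitalCStarAlgebra A] [PartialOrder A] [StarOrderedRing A]
    (B : NonUnitalStarSubalgebra ℂ A)
    (E : A →L[ℂ] A)
    (hrange : ∀ a : A, E a ∈ B)
    (hfix : ∀ b ∈ B, E b = b)
    (hpos : ∀ a : A, 0 ≤ a → 0 ≤ E a)
    (hbimod : ∀ b ∈ B, ∀ b' ∈ B, ∀ x : A, E (b * x * b') = b * E x * b')
    (hqb : ∃ (n : ℕ) (u : Fin n → A), ∀ x : A, x = ∑ i, u i * E (star (u i) * x)) :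
    (∃ γ : ℝ, 1 ≤ γ ∧ ∀ a : A, 0 ≤ a → a ≤ γ • E a) ∧
    (∀ a : A, E (star a * a) = 0 → a = 0) := by
  obtain ⟨n, u, hu⟩ := hqb
  set C := ‖∑ i, u i * star (u i)‖ ^ 2
  have key : ∀ x, star x * x ≤ C • E (star x * x) :=
    (PositiveLinearMap.mk₀ E.toLinearMap hpos).star_mul_self_le_norm_sq_smul_of_quasiBasis
      hrange hfix hbimod u hu
  refine ⟨⟨max 1 C, le_max_left _ _, fun a ha => ?_⟩, fun a ha => ?_⟩
  · obtain ⟨x, rfl⟩ := CStarAlgebra.nonneg_iff_eq_star_mul_self.mp ha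
    exact (key x).trans (smul_le_smul_of_nonneg_right (le_max_right _ _) (hpos _ ha))
  · have hle := key a
    rw [ha, smul_zero] at hle
    exact (CStarRing.star_mul_self_eq_zero_iff a).mp (le_antisymm hle (star_mul_self_nonneg a))

/-- If a conditional expectation `E : A → B` admits a finite quasi-basis, then
`E` has finite probabilistic index; in particular, `E` is faithful. -/
theorem finite_probabilistic_index_and_faithful_of_finite_quasi_basis
    {A : Type*} [NonUnitalCStarAlgebra A] [PartialOrder A] [StarOrderedRing A]
    (B : NonUnitalStarSubalgebra ℂ A) (hB : IsClosed (B : Set A))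
    (E : A →L[ℂ] A)
    (hrange : ∀ a : A, E a ∈ B)
    (hfix : ∀ b ∈ B, E b = b)
    (hpos : ∀ a : A, 0 ≤ a → 0 ≤ E a)
    (hbimod : ∀ b ∈ B, ∀ b' ∈ B, ∀ x : A, E (b * x * b') = b * E x * b')
    (hqb : ∃ (n : ℕ) (u : Fin n → A), ∀ x : A, x = ∑ i, u i * E (star (u i) * x)) :
    (∃ γ : ℝ, 1 ≤ γ ∧ ∀ a : A, 0 ≤ a → a ≤ γ • E a) ∧
    (∀ a : A, E (star a * a) = 0 → a = 0) :=
  finite_probabilistic_index_and_faithful_of_finite_quasi_basis_general B E hrange hfix hpos hbimod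
    hqb
end

section
/- Let A be a unital C*-algebra, B a closed star-subalgebra of A containing the unit of A, and E : A → A a conditional expectation from A onto B. Suppose u_1, …, u_n and v_1, …, v_m are two finite quasi-bases for E. Then Σ_{i=1}^n u_i u_i^* = Σ_{j=1}^m v_j v_j^*; moreover, this common element Ind_W(E) := Σ_{i=1}^n u_i u_i^* is a positive invertible element of the center of A (it commutes with every element of A). Thus the Watatani index Ind_W(E) is independent of the choice of quasi-basis. -/
/-!
Positivity makes `E` star-preserving, which turns a quasi-basis expansion
`x = ∑ uᵢ E(uᵢ⋆ x)` into the right-handed one `x = ∑ E(x uᵢ) uᵢ⋆`. Expanding each `x uᵢ` in a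
second quasi-basis `v` and resumming gives `x (∑ uᵢ uᵢ⋆) = (∑ vⱼ vⱼ⋆) x`: with `x = 1` this is
independence of the quasi-basis, with `v = u` centrality. For invertibility of `c = ∑ uᵢ uᵢ⋆`,
the expansion gives `‖x‖² ≤ K ‖x⋆ c x‖` for a fixed `K`; if `c` were singular, a continuous
cut-off of `c` at `0 ∈ σ(c)` would have norm `1` but arbitrarily small `‖x⋆ c x‖`.
-/

open Finset

lemma map_star_of_map_nonneg {A B : Type*} [CStarAlgebra A] [PartialOrder A] [StarOrderedRing A]
    [NonUnitalRing B] [StarRing B] [PartialOrder B] [StarOrderedRing B] [Module ℂ B]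
    [StarModule ℂ B] (E : A →ₗ[ℂ] B) (hpos : ∀ a, 0 ≤ a → 0 ≤ E a) (a : A) :
    E (star a) = star (E a) := by
  obtain ⟨x, hx, -, rfl⟩ := CStarAlgebra.exists_sum_four_nonneg a
  simp only [star_sum, star_smul, map_sum, map_smul, (hx _).isSelfAdjoint.star_eq,
    (hpos _ (hx _)).isSelfAdjoint.star_eq]

def IsQuasiBasis {R ι : Type*} [NonUnitalRing R] [StarRing R] [Fintype ι] (E : R → R)
    (u : ι → R) : Prop :=
  ∀ x, x = ∑ i, u i * E (star (u i) * x)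

namespace IsQuasiBasis

variable {R ι κ : Type*} [NonUnitalRing R] [StarRing R] [Fintype ι] [Fintype κ]
  {E : R → R} {u : ι → R} {v : κ → R}

lemma eq_sum_map_mul_star (hE : ∀ a, E (star a) = star (E a)) (hu : IsQuasiBasis E u) (x : R) :
    x = ∑ i, E (x * u i) * star (u i) := by
  conv_lhs => rw [← star_star x, hu (star x)]
  simp only [star_sum, star_mul, star_star, ← hE]

lemma mul_sum_mul_star (hE : ∀ a, E (star a) = star (E a)) (hu : IsQuasiBasis E u)
    (hv : IsQuasiBasis E v) (x : R) :
    x * ∑ i, u i * star (u i) = (∑ j, v j * star (v j)) * x :=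
  calc x * ∑ i, u i * star (u i)
      = ∑ i, ∑ j, v j * (E (star (v j) * (x * u i)) * star (u i)) := by
        simp only [mul_sum, ← mul_assoc]
        refine sum_congr rfl fun i _ => ?_
        conv_lhs => rw [hv (x * u i)]
        simp only [sum_mul, mul_assoc]
    _ = ∑ j, v j * ∑ i, E ((star (v j) * x) * u i) * star (u i) := by
        rw [sum_comm]
        simp only [mul_sum, mul_assoc]
    _ = ∑ j, v j * (star (v j) * x) := by
        simp only [← hu.eq_sum_map_mul_star hE]
    _ = (∑ j, v j * star (v j)) * x := by
        simp only [sum_mul, mul_assoc]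

end IsQuasiBasis

section CStarAlgebra

variable {A : Type*} [CStarAlgebra A] [PartialOrder A] [StarOrderedRing A]

lemma exists_one_le_norm_and_norm_star_mul_mul_le {c : A} (hc : 0 ≤ c) (hc' : ¬IsUnit c)
    {ε : ℝ} (hε : 0 < ε) : ∃ p : A, 1 ≤ ‖p‖ ∧ ‖star p * c * p‖ ≤ ε := by
  -- a continuous cut-off equal to `1` at `0 ∈ σ c` and vanishing on `[ε, ∞)`
  set f : ℝ → ℝ := fun t => 1 - min 1 (t / ε)
  have hf_bound : ∀ t, 0 ≤ t → |f t * t * f t| ≤ ε := by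
    intro t ht
    have hmin : 0 ≤ min 1 (t / ε) := le_min zero_le_one (by positivity)
    rcases le_or_gt t ε with hle | hgt
    · have hf1 : f t ≤ 1 := by simp only [f]; linarith
      have hf0 : 0 ≤ f t := by simp only [f, sub_nonneg]; exact min_le_left _ _
      rw [abs_of_nonneg (by positivity)]
      nlinarith [mul_le_mul hf1 hf1 hf0 zero_le_one]
    · have : f t = 0 := by
        simp only [f, min_eq_left ((one_le_div hε).mpr hgt.le), sub_self]
      simp [this, hε.le]
  refine ⟨cfc f c, ?_, ?_⟩
  · have h0 : (0 : ℝ) ∈ spectrum ℝ c := (spectrum.zero_mem_iff ℝ).mpr hc'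
    simpa [f] using norm_apply_le_norm_cfc f c h0
  · have hconj : star (cfc f c) * c * cfc f c = cfc (fun t => f t * t * f t) c := by
      rw [(cfc_predicate f c).star_eq, cfc_mul _ _ c, cfc_mul _ _ c, cfc_id' ℝ c]
    rw [hconj]
    exact norm_cfc_le hε.le fun t ht => hf_bound t (spectrum_nonneg_of_nonneg hc ht)

lemma isUnit_of_norm_sq_le_mul_norm_star_mul_mul {c : A} (hc : 0 ≤ c) (K : ℝ)
    (h : ∀ x, ‖x‖ ^ 2 ≤ K * ‖star x * c * x‖) : IsUnit c := by
  by_contra hc'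
  obtain ⟨p, hp1, hp⟩ := exists_one_le_norm_and_norm_star_mul_mul_le hc hc'
    (ε := 1 / (|K| + 1)) (by positivity)
  have hKε : K * ‖star p * c * p‖ < 1 :=
    calc K * ‖star p * c * p‖ ≤ |K| * (1 / (|K| + 1)) :=
          mul_le_mul (le_abs_self K) hp (norm_nonneg _) (abs_nonneg K)
      _ < 1 := by rw [mul_one_div, div_lt_one (by positivity)]; linarith
  nlinarith [h p]

lemma IsQuasiBasis.norm_sq_le {ι : Type*} [Fintype ι] {E : A →L[ℂ] A} {u : ι → A}
    (hu : IsQuasiBasis E u) (x : A) :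
    ‖x‖ ^ 2 ≤ ((∑ i, ‖u i‖) * ‖E‖) ^ 2 * ‖star x * (∑ i, u i * star (u i)) * x‖ := by
  set N := ‖star x * (∑ i, u i * star (u i)) * x‖
  have hterm : ∀ i, ‖star (u i) * x‖ ≤ √N := fun i => by
    refine Real.le_sqrt_of_sq_le ?_
    have hsq : ‖star (u i) * x‖ ^ 2 = ‖star x * (u i * star (u i)) * x‖ := by
      rw [sq, ← CStarRing.norm_star_mul_self, star_mul, star_star, mul_assoc, mul_assoc,
        mul_assoc]
    rw [hsq]
    refine CStarAlgebra.norm_le_norm_of_nonneg_of_le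
      (star_left_conjugate_nonneg (mul_star_self_nonneg _) x)
      (star_left_conjugate_le_conjugate ?_ x)
    exact single_le_sum (f := fun i => u i * star (u i)) (fun i _ => mul_star_self_nonneg (u i))
      (mem_univ i)
  have hx : ‖x‖ ≤ (∑ i, ‖u i‖) * ‖E‖ * √N :=
    calc ‖x‖ = ‖∑ i, u i * E (star (u i) * x)‖ := by rw [← hu x]
      _ ≤ ∑ i, ‖u i‖ * (‖E‖ * √N) := by
          refine (norm_sum_le _ _).trans (sum_le_sum fun i _ => ?_)
          refine (norm_mul_le _ _).trans (mul_le_mul_of_nonneg_left ?_ (norm_nonneg _))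
          exact (E.le_opNorm _).trans (mul_le_mul_of_nonneg_left (hterm i) (norm_nonneg _))
      _ = (∑ i, ‖u i‖) * ‖E‖ * √N := by rw [← sum_mul, mul_assoc]
  calc ‖x‖ ^ 2 ≤ ((∑ i, ‖u i‖) * ‖E‖ * √N) ^ 2 := pow_le_pow_left₀ (norm_nonneg _) hx 2
    _ = ((∑ i, ‖u i‖) * ‖E‖) ^ 2 * N := by rw [mul_pow, Real.sq_sqrt (norm_nonneg _)]

end CStarAlgebra

theorem watatani_index_well_defined_central_positive_invertible_general
    {A : Type*} [CStarAlgebra A] [PartialOrder A] [StarOrderedRing A]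
    (E : A →L[ℂ] A)
    (hpos : ∀ a : A, 0 ≤ a → 0 ≤ E a)
    {n m : ℕ} (u : Fin n → A) (v : Fin m → A)
    (hu : ∀ x : A, x = ∑ i, u i * E (star (u i) * x))
    (hv : ∀ x : A, x = ∑ j, v j * E (star (v j) * x)) :
    (∑ i, u i * star (u i)) = (∑ j, v j * star (v j)) ∧
    0 ≤ ∑ i, u i * star (u i) ∧
    IsUnit (∑ i, u i * star (u i)) ∧
    ∀ a : A, (∑ i, u i * star (u i)) * a = a * (∑ i, u i * star (u i)) := by
  have hE : ∀ a, E (star a) = star (E a) := map_star_of_map_nonneg (E : A →ₗ[ℂ] A) hpos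
  have hc : 0 ≤ ∑ i, u i * star (u i) := sum_nonneg fun i _ => mul_star_self_nonneg (u i)
  refine ⟨?_, hc, ?_, fun a => ?_⟩
  · simpa using IsQuasiBasis.mul_sum_mul_star hE hu hv 1
  · exact isUnit_of_norm_sq_le_mul_norm_star_mul_mul hc _ (IsQuasiBasis.norm_sq_le hu)
  · exact (IsQuasiBasis.mul_sum_mul_star hE hu hu a).symm

/-- For a conditional expectation `E : A → B` on a unital C*-algebra, the
Watatani index `Ind_W(E) = Σᵢ uᵢ uᵢ⋆` does not depend on the choice of finite quasi-basis
`u₁, …, u_n`, and it is a positive invertible central element of `A`. -/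
theorem watatani_index_well_defined_central_positive_invertible
    {A : Type*} [CStarAlgebra A] [PartialOrder A] [StarOrderedRing A]
    (B : StarSubalgebra ℂ A) (hB : IsClosed (B : Set A))
    (E : A →L[ℂ] A)
    (hrange : ∀ a : A, E a ∈ B)
    (hfix : ∀ b ∈ B, E b = b)
    (hpos : ∀ a : A, 0 ≤ a → 0 ≤ E a)
    (hbimod : ∀ b ∈ B, ∀ b' ∈ B, ∀ x : A, E (b * x * b') = b * E x * b')
    {n m : ℕ} (u : Fin n → A) (v : Fin m → A)
    (hu : ∀ x : A, x = ∑ i, u i * E (star (u i) * x))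
    (hv : ∀ x : A, x = ∑ j, v j * E (star (v j) * x)) :
    (∑ i, u i * star (u i)) = (∑ j, v j * star (v j)) ∧
    0 ≤ ∑ i, u i * star (u i) ∧
    IsUnit (∑ i, u i * star (u i)) ∧
    ∀ a : A, (∑ i, u i * star (u i)) * a = a * (∑ i, u i * star (u i)) :=
  watatani_index_well_defined_central_positive_invertible_general E hpos u v hu hv
end

section
/- Let A be a C*-algebra (not necessarily unital), let B ⊆ P ⊆ A be closed star-subalgebras, let E : A → A be a faithful conditional expectation from A onto B (i.e., E(a^* a) = 0 implies a = 0), and let F, G : A → A be conditional expectations from A onto P satisfying E(F(x)) = E(x) and E(G(x)) = E(x) for all x ∈ A. Then F = G. (Hence an intermediate subalgebra P is compatible with E via at most one conditional expectation.) -/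
/-!
Put `d = F x - G x ∈ P`. For `p, p' ∈ P` the bimodule property and `E ∘ F = E = E ∘ G` give
`E (p * d * p') = E (F (p * x * p')) - E (G (p * x * p')) = 0`. An approximate unit of the
C⋆-algebra `P` shows that `d⋆ * d` lies in the closure of `{d⋆ * d * p' | p' ∈ P}`, so by continuity
`E (d⋆ * d) = 0`, and faithfulness of `E` gives `d = 0`.
-/

open Filter Topology

theorem NonUnitalStarSubalgebra.mem_closure_mul_image {A : Type*} [NonUnitalCStarAlgebra A]
    (P : NonUnitalStarSubalgebra ℂ A) [IsClosed (P : Set A)] {a : A} (ha : a ∈ P) :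
    a ∈ closure ((a * ·) '' (P : Set A)) := by
  -- `P` carries no order of its own; the approximate unit is taken for its spectral order.
  let _ := CStarAlgebra.spectralOrder P
  have _ := CStarAlgebra.spectralOrderedRing P
  have hlim : Tendsto (fun p : P ↦ a * p) (CStarAlgebra.approximateUnit P) (𝓝 a) :=
    continuous_subtype_val.tendsto _ |>.comp <|
      (CStarAlgebra.increasingApproximateUnit P).tendsto_mul_left ⟨a, ha⟩
  exact mem_closure_of_tendsto hlim <| .of_forall fun p ↦ ⟨p, p.2, rfl⟩

theorem map_mul_sub_mul_eq_zero_of_comp_eq {A M : Type*} [NonUnitalRing A] [FunLike M A A]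
    [AddMonoidHomClass M A A] (P : Set A) (E : M) (F G : A → A)
    (hFbimod : ∀ p ∈ P, ∀ p' ∈ P, ∀ x : A, F (p * x * p') = p * F x * p')
    (hGbimod : ∀ p ∈ P, ∀ p' ∈ P, ∀ x : A, G (p * x * p') = p * G x * p')
    (hEFG : ∀ x, E (F x) = E (G x)) {p p' : A} (hp : p ∈ P) (hp' : p' ∈ P) (x : A) :
    E (p * (F x - G x) * p') = 0 := by
  rw [mul_sub, sub_mul, map_sub, ← hFbimod p hp p' hp', ← hGbimod p hp p' hp', hEFG, sub_self]

theorem compatible_expectation_unique_general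
    {A : Type*} [NonUnitalCStarAlgebra A]
    (P : NonUnitalStarSubalgebra ℂ A)
    (hP : IsClosed (P : Set A))
    (E : A →L[ℂ] A)
    (hEfaithful : ∀ a : A, E (star a * a) = 0 → a = 0)
    (F G : A →L[ℂ] A)
    (hFrange : ∀ a : A, F a ∈ P)
    (hFbimod : ∀ p ∈ P, ∀ p' ∈ P, ∀ x : A, F (p * x * p') = p * F x * p')
    (hGrange : ∀ a : A, G a ∈ P)
    (hGbimod : ∀ p ∈ P, ∀ p' ∈ P, ∀ x : A, G (p * x * p') = p * G x * p')
    (hEF : ∀ x : A, E (F x) = E x)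
    (hEG : ∀ x : A, E (G x) = E x) :
    F = G := by
  ext x
  set d := F x - G x
  have hd : d ∈ P := sub_mem (hFrange x) (hGrange x)
  have hvanish : ∀ p' ∈ P, E (star d * d * p') = 0 := fun p' hp' ↦
    map_mul_sub_mul_eq_zero_of_comp_eq P E F G hFbimod hGbimod
      (fun y ↦ (hEF y).trans (hEG y).symm) (star_mem hd) hp' x
  have hclosure := P.mem_closure_mul_image (mul_mem (star_mem hd) hd)
  have hEdd : E (star d * d) = 0 := by
    refine (isClosed_eq E.continuous continuous_const).closure_subset_iff.mpr ?_ hclosure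
    rintro _ ⟨p', hp', rfl⟩
    exact hvanish p' hp'
  exact sub_eq_zero.mp (hEfaithful d hEdd)

/-- If `E : A → B` is a faithful conditional expectation and `F, G : A → P` are
conditional expectations onto an intermediate closed star-subalgebra `B ⊆ P ⊆ A` with
`E ∘ F = E` and `E ∘ G = E`, then `F = G`: an intermediate subalgebra is compatible with `E`
via at most one conditional expectation. -/
theorem compatible_expectation_unique
    {A : Type*} [NonUnitalCStarAlgebra A] [PartialOrder A] [StarOrderedRing A]
    (B P : NonUnitalStarSubalgebra ℂ A) (hB : IsClosed (B : Set A))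
    (hP : IsClosed (P : Set A)) (hBP : B ≤ P)
    (E : A →L[ℂ] A)
    (hErange : ∀ a : A, E a ∈ B)
    (hEfix : ∀ b ∈ B, E b = b)
    (hEpos : ∀ a : A, 0 ≤ a → 0 ≤ E a)
    (hEbimod : ∀ b ∈ B, ∀ b' ∈ B, ∀ x : A, E (b * x * b') = b * E x * b')
    (hEfaithful : ∀ a : A, E (star a * a) = 0 → a = 0)
    (F G : A →L[ℂ] A)
    (hFrange : ∀ a : A, F a ∈ P)
    (hFfix : ∀ p ∈ P, F p = p)
    (hFpos : ∀ a : A, 0 ≤ a → 0 ≤ F a)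
    (hFbimod : ∀ p ∈ P, ∀ p' ∈ P, ∀ x : A, F (p * x * p') = p * F x * p')
    (hGrange : ∀ a : A, G a ∈ P)
    (hGfix : ∀ p ∈ P, G p = p)
    (hGpos : ∀ a : A, 0 ≤ a → 0 ≤ G a)
    (hGbimod : ∀ p ∈ P, ∀ p' ∈ P, ∀ x : A, G (p * x * p') = p * G x * p')
    (hEF : ∀ x : A, E (F x) = E x)
    (hEG : ∀ x : A, E (G x) = E x) :
    F = G :=
  compatible_expectation_unique_general P hP E hEfaithful F G hFrange hFbimod hGrange hGbimod hEF
    hEG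
end
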